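/- (Equality case of Wirtinger's inequality, converse direction.) Let V be a real inner product space and J : V → V a linear map satisfying J² = −id and ⟨Ju, Jv⟩ = ⟨u, v⟩ for all u, v ∈ V. Define ω(u, v) = ⟨Ju, v⟩. Let W ⊆ V be a subspace of real dimension 2m with J(W) = W. Then there exists an orthonormal basis of W of the form (e₁, Je₁, e₂, Je₂, …, e_m, Je_m) (the orientation induced by the complex structure), and on this basis ω^m(e₁, Je₁, …, e_m, Je_m) = m!. -/

import Mathlib

/-!
A frame `(e₁, Je₁, …, e_m, Je_m)` of `W` is built one pair at a time: if `x ∈ W` is a unit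
vector orthogonal to the `eᵢ` and `Jeᵢ` chosen so far, then so is `Jx`, and `⟪x, Jx⟫ = 0`,
because `J` is an isometry with `J² = -1`. In such a frame the matrix of `ω` is the standard
symplectic one, so a term of the alternating sum defining `ω^m` survives only for the `2^m m!`
permutations that carry the pairs `{2k, 2k+1}` onto pairs, and each surviving term equals `1`.
-/

/-- The `m`-fold wedge power `ω^m = ω ∧ ⋯ ∧ ω` of a 2-form `ω`, evaluated on a tuple of
`2m` vectors, given by the usual alternating sum over permutations:
`(ω^m)(v₁, …, v_{2m}) = (1/2^m) ∑_{σ ∈ S_{2m}} sign σ · ∏_{k=1}^m ω(v_{σ(2k-1)}, v_{σ(2k)})`. -/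
noncomputable def omegaPow {V : Type*} (m : ℕ) (ω : V → V → ℝ)
    (v : Fin (2 * m) → V) : ℝ :=
  (∑ σ : Equiv.Perm (Fin (2 * m)), ((Equiv.Perm.sign σ : ℤ) : ℝ) *
    ∏ k : Fin m,
      ω (v (σ ⟨2 * (k : ℕ), by have := k.isLt; omega⟩))
        (v (σ ⟨2 * (k : ℕ) + 1, by have := k.isLt; omega⟩))) / 2 ^ m

open Equiv Equiv.Perm Finset
open scoped InnerProductSpace

def finTwoMulEquiv (m : ℕ) : Fin (2 * m) ≃ Fin m × Bool where
  toFun i := (⟨(i : ℕ).div2, by rw [Nat.div2_val]; omega⟩, (i : ℕ).bodd)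
  invFun p := ⟨Nat.bit p.2 p.1, by rw [Nat.bit_val]; have := p.2.toNat_le; omega⟩
  left_inv i := Fin.ext (Nat.bit_bodd_div2 i)
  right_inv p := by ext <;> simp

@[simp] lemma finTwoMulEquiv_apply_two_mul {m : ℕ} (k : Fin m) :
    finTwoMulEquiv m ⟨2 * (k : ℕ), by omega⟩ = (k, false) := by
  ext <;> simp [finTwoMulEquiv, Nat.div2_val]

@[simp] lemma finTwoMulEquiv_apply_two_mul_add_one {m : ℕ} (k : Fin m) :
    finTwoMulEquiv m ⟨2 * (k : ℕ) + 1, by omega⟩ = (k, true) := by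
  ext <;> simp [finTwoMulEquiv, Nat.div2_val]; omega

section StdSymplectic

variable {ι : Type*}

def stdSymplectic [DecidableEq ι] (p q : ι × Bool) : ℝ :=
  if q = (p.1, !p.2) then (if p.2 then -1 else 1) else 0

def pairPerm (τ : Perm ι) (ε : ι → Bool) : Perm (ι × Bool) :=
  prodCongrLeft (fun _ => τ) * prodCongrRight (fun k => if ε k then swap false true else 1)

@[simp] lemma pairPerm_apply (τ : Perm ι) (ε : ι → Bool) (k : ι) (b : Bool) :
    pairPerm τ ε (k, b) = (τ k, xor (ε k) b) := by
  simp only [pairPerm, Perm.mul_apply, prodCongrRight_apply, prodCongrLeft_apply]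
  cases ε k <;> cases b <;> simp

lemma sign_pairPerm [Fintype ι] [DecidableEq ι] (τ : Perm ι) (ε : ι → Bool) :
    ((sign (pairPerm τ ε) : ℤ) : ℝ) = ∏ k, if ε k then -1 else 1 := by
  rw [pairPerm, map_mul, sign_prodCongrLeft, sign_prodCongrRight, prod_const, card_univ,
    Fintype.card_bool, Int.units_sq, one_mul, Units.coe_prod, Int.cast_prod]
  refine prod_congr rfl fun k _ => ?_
  split_ifs <;> simp

lemma pairPerm_injective :
    Function.Injective fun x : Perm ι × (ι → Bool) => pairPerm x.1 x.2 := by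
  rintro ⟨τ, ε⟩ ⟨τ', ε'⟩ h
  have h' (k : ι) : (τ k, ε k) = (τ' k, ε' k) := by
    simpa using DFunLike.congr_fun h (k, false)
  exact Prod.ext (Equiv.ext fun k => congrArg Prod.fst (h' k))
    (funext fun k => congrArg Prod.snd (h' k))

lemma exists_pairPerm_eq [Finite ι] (π : Perm (ι × Bool))
    (hπ : ∀ k, π (k, true) = ((π (k, false)).1, !(π (k, false)).2)) :
    ∃ τ ε, pairPerm τ ε = π := by
  have hinj : Function.Injective fun k => (π (k, false)).1 := by
    intro k k' hkk'
    by_contra hne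
    by_cases hb : (π (k, false)).2 = (π (k', false)).2
    · exact hne (congrArg Prod.fst (π.injective (Prod.ext hkk' hb)))
    · have : π (k', false) = π (k, true) := by
        rw [hπ k]
        exact Prod.ext hkk'.symm (Bool.eq_not_iff.2 (Ne.symm hb))
      exact Bool.false_ne_true (congrArg Prod.snd (π.injective this))
  refine ⟨Equiv.ofBijective _ (Finite.injective_iff_bijective.1 hinj),
    fun k => (π (k, false)).2, ?_⟩
  ext ⟨k, b⟩ : 1
  cases b <;> simp [hπ]

theorem sum_sign_mul_prod_stdSymplectic [Fintype ι] [DecidableEq ι] :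
    ∑ π : Perm (ι × Bool), ((sign π : ℤ) : ℝ) * ∏ k, stdSymplectic (π (k, false)) (π (k, true)) =
      2 ^ Fintype.card ι * (Fintype.card ι).factorial := by
  rw [← Fintype.sum_of_injective (fun x : Perm ι × (ι → Bool) => pairPerm x.1 x.2)
    pairPerm_injective (fun _ => (1 : ℝ))]
  · simp [Fintype.card_perm, mul_comm]
  · intro π hπ
    refine mul_eq_zero_of_right _ (prod_eq_zero_iff.2 ?_)
    by_contra! h
    obtain ⟨τ, ε, rfl⟩ := exists_pairPerm_eq π fun k => by
      by_contra hk
      exact h k (mem_univ k) (if_neg hk)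
    exact hπ ⟨(τ, ε), rfl⟩
  · rintro ⟨τ, ε⟩
    rw [sign_pairPerm, ← prod_mul_distrib]
    refine (prod_eq_one fun k _ => ?_).symm
    cases h : ε k <;> simp [stdSymplectic, h]

end StdSymplectic

lemma omegaPow_comp_finTwoMulEquiv {V : Type*} {m : ℕ} {ω : V → V → ℝ} {u : Fin m × Bool → V}
    (hu : ∀ p q, ω (u p) (u q) = stdSymplectic p q) :
    omegaPow m ω (u ∘ finTwoMulEquiv m) = m.factorial := by
  rw [omegaPow, ← Fintype.sum_equiv (finTwoMulEquiv m).permCongr.symm _ _ fun σ => rfl]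
  simp only [sign_permCongr, Function.comp_apply, permCongr_symm, permCongr_apply, symm_symm,
    apply_symm_apply, finTwoMulEquiv_apply_two_mul, finTwoMulEquiv_apply_two_mul_add_one, hu,
    sum_sign_mul_prod_stdSymplectic, Fintype.card_fin]
  field_simp

section ComplexStructure

variable {V : Type*} [NormedAddCommGroup V] [InnerProductSpace ℝ V] {J : V →ₗ[ℝ] V} {ι : Type*}

lemma inner_map_left_eq_neg (hJ2 : ∀ v, J (J v) = -v) (hJc : ∀ u v, ⟪J u, J v⟫_ℝ = ⟪u, v⟫_ℝ)
    (u v : V) : ⟪J u, v⟫_ℝ = -⟪u, J v⟫_ℝ := by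
  rw [← hJc u (J v), hJ2, inner_neg_right, neg_neg]

def complexFrame (J : V →ₗ[ℝ] V) (e : ι → V) (p : ι × Bool) : V :=
  bif p.2 then J (e p.1) else e p.1

@[simp] lemma complexFrame_false (e : ι → V) (i : ι) : complexFrame J e (i, false) = e i := rfl

@[simp] lemma complexFrame_true (e : ι → V) (i : ι) : complexFrame J e (i, true) = J (e i) := rfl

lemma orthonormal_complexFrame_iff (hJ2 : ∀ v, J (J v) = -v)
    (hJc : ∀ u v, ⟪J u, J v⟫_ℝ = ⟪u, v⟫_ℝ) {e : ι → V} :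
    Orthonormal ℝ (complexFrame J e) ↔ Orthonormal ℝ e ∧ ∀ i j, ⟪e i, J (e j)⟫_ℝ = 0 := by
  classical
  refine ⟨fun h => ⟨h.comp (·, false) fun i j => congrArg Prod.fst, fun i j => ?_⟩, ?_⟩
  · simpa using h.2 (i := (i, false)) (j := (j, true)) (by simp)
  · rintro ⟨he, hJe⟩
    rw [orthonormal_iff_ite] at he ⊢
    rintro ⟨i, _ | _⟩ ⟨j, _ | _⟩
    · simp [he]
    · simp [hJe]
    · simp [inner_map_left_eq_neg hJ2 hJc, hJe]
    · simp [hJc, he]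

lemma inner_map_complexFrame [DecidableEq ι] (hJ2 : ∀ v, J (J v) = -v) {e : ι → V}
    (he : Orthonormal ℝ (complexFrame J e)) (p q : ι × Bool) :
    ⟪J (complexFrame J e p), complexFrame J e q⟫_ℝ = stdSymplectic p q := by
  have key :
      J (complexFrame J e p) = (if p.2 then -1 else 1 : ℝ) • complexFrame J e (p.1, !p.2) := by
    obtain ⟨i, _ | _⟩ := p <;> simp [hJ2]
  rw [key, real_inner_smul_left, orthonormal_iff_ite.1 he]
  simp only [stdSymplectic, eq_comm (a := q)]
  split_ifs <;> norm_num

lemma orthonormal_complexFrame_cons (hJ2 : ∀ v, J (J v) = -v)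
    (hJc : ∀ u v, ⟪J u, J v⟫_ℝ = ⟪u, v⟫_ℝ) {n : ℕ} {e : Fin n → V}
    (he : Orthonormal ℝ (complexFrame J e)) {x : V} (hx : ‖x‖ = 1)
    (hxe : x ∈ (Submodule.span ℝ (Set.range (complexFrame J e)))ᗮ) :
    Orthonormal ℝ (complexFrame J (Fin.cons x e : Fin (n + 1) → V)) := by
  rw [orthonormal_complexFrame_iff hJ2 hJc] at he ⊢
  obtain ⟨he, hJe⟩ := he
  have hxe' (i : Fin n) : ⟪x, e i⟫_ℝ = 0 ∧ ⟪x, J (e i)⟫_ℝ = 0 := by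
    rw [Submodule.mem_orthogonal'] at hxe
    exact ⟨hxe _ (Submodule.subset_span ⟨(i, false), rfl⟩),
      hxe _ (Submodule.subset_span ⟨(i, true), rfl⟩)⟩
  refine ⟨?_, ?_⟩
  · rw [orthonormal_iff_ite] at he ⊢
    refine Fin.cases (Fin.cases ?_ fun j => ?_) (fun i => Fin.cases ?_ fun j => ?_)
    · simp [hx]
    · simp [(hxe' j).1, (Fin.succ_ne_zero j).symm]
    · simp [real_inner_comm, (hxe' i).1]
    · simp [he]
  · have hskew := inner_map_left_eq_neg hJ2 hJc
    refine Fin.cases (Fin.cases ?_ fun j => ?_) (fun i => Fin.cases ?_ fun j => ?_)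
    · simp only [Fin.cons_zero]
      linarith [hskew x x, real_inner_comm x (J x)]
    · simpa using (hxe' j).2
    · simp only [Fin.cons_zero, Fin.cons_succ]
      linarith [hskew (e i) x, (hxe' i).2, real_inner_comm x (J (e i))]
    · simpa using hJe i j

lemma exists_orthonormal_complexFrame (hJ2 : ∀ v, J (J v) = -v)
    (hJc : ∀ u v, ⟪J u, J v⟫_ℝ = ⟪u, v⟫_ℝ) {W : Submodule ℝ V} [FiniteDimensional ℝ W]
    (hJW : W ≤ W.comap J) {m : ℕ} (hW : Module.finrank ℝ W = 2 * m) :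
    ∃ e : Fin m → V, (∀ p, complexFrame J e p ∈ W) ∧ Orthonormal ℝ (complexFrame J e) := by
  suffices ∀ k ≤ m, ∃ e : Fin k → V, (∀ i, e i ∈ W) ∧ Orthonormal ℝ (complexFrame J e) by
    obtain ⟨e, heW, he⟩ := this m le_rfl
    exact ⟨e, fun ⟨i, b⟩ => by cases b; exacts [heW i, hJW (heW i)], he⟩
  intro k hk
  induction k with
  | zero => exact ⟨Fin.elim0, fun i => i.elim0, by simp [Orthonormal]⟩
  | succ k ih =>
    obtain ⟨e, heW, he⟩ := ih (by omega)
    set S := Submodule.span ℝ (Set.range (complexFrame J e))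
    have hSW : S ≤ W := Submodule.span_le.2 <| Set.range_subset_iff.2 fun ⟨i, b⟩ => by
      cases b; exacts [heW i, hJW (heW i)]
    have hS : Module.finrank ℝ S = 2 * k := by
      rw [finrank_span_eq_card he.linearIndependent]
      simp [mul_comm]
    have hSW' : Module.finrank ℝ (Sᗮ ⊓ W : Submodule ℝ V) = 2 * (m - k) :=
      Submodule.finrank_add_inf_finrank_orthogonal' hSW (by omega)
    obtain ⟨y, hy, hy0⟩ := Submodule.exists_mem_ne_zero_of_ne_bot (p := Sᗮ ⊓ W) fun h => by
      rw [h, finrank_bot] at hSW'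
      omega
    refine ⟨Fin.cons (‖y‖⁻¹ • y) e, Fin.cases (W.smul_mem _ hy.2) heW,
      orthonormal_complexFrame_cons hJ2 hJc he (norm_smul_inv_norm hy0)
        (Submodule.smul_mem _ _ hy.1)⟩

end ComplexStructure

lemma exists_orthonormalBasis_coe_eq {𝕜 E ι : Type*} [RCLike 𝕜] [NormedAddCommGroup E]
    [InnerProductSpace 𝕜 E] [Fintype ι] {W : Submodule 𝕜 E} [FiniteDimensional 𝕜 W] {f : ι → E}
    (hfW : ∀ i, f i ∈ W) (hf : Orthonormal 𝕜 f) (hcard : Fintype.card ι = Module.finrank 𝕜 W) :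
    ∃ b : OrthonormalBasis ι 𝕜 W, ∀ i, (b i : E) = f i := by
  have hf' : Orthonormal 𝕜 fun i => (⟨f i, hfW i⟩ : W) := W.subtypeₗᵢ.orthonormal_comp_iff.1 hf
  exact ⟨.mk hf' (hf'.linearIndependent.span_eq_top_of_card_eq_finrank' hcard).ge, fun i => by simp⟩

/-- **equality case of Wirtinger's inequality, converse direction.**
Let `V` be a real inner product space, `J` a compatible almost complex structure,
`ω (u, v) = ⟨Ju, v⟩`.  Let `W ⊆ V` be a subspace of real dimension `2m` with `J (W) = W`.
Then `W` has an orthonormal basis of the form `(e₁, Je₁, …, e_m, Je_m)` (the orientation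
induced by the complex structure), and on this basis
`ω^m (e₁, Je₁, …, e_m, Je_m) = m!`. -/
theorem exists_canonical_basis_omegaPow_eq_factorial
    {V : Type*} [NormedAddCommGroup V] [InnerProductSpace ℝ V]
    (J : V →ₗ[ℝ] V)
    (hJ2 : ∀ v : V, J (J v) = -v)
    (hJc : ∀ u v : V, (inner ℝ (J u) (J v) : ℝ) = inner ℝ u v)
    (ω : V → V → ℝ)
    (hω : ∀ u v : V, ω u v = inner ℝ (J u) v)
    (m : ℕ) (W : Submodule ℝ V) [FiniteDimensional ℝ W]
    (hW : Module.finrank ℝ W = 2 * m)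
    (hJW : Submodule.map J W = W) :
    ∃ b : OrthonormalBasis (Fin (2 * m)) ℝ W,
      (∀ k : Fin m,
        ((b ⟨2 * (k : ℕ) + 1, by have := k.isLt; omega⟩ : W) : V) =
          J ((b ⟨2 * (k : ℕ), by have := k.isLt; omega⟩ : W) : V)) ∧
      omegaPow m ω (fun i => (b i : W)) = (m.factorial : ℝ) := by
  obtain ⟨e, heW, he⟩ := exists_orthonormal_complexFrame hJ2 hJc
    (Submodule.map_le_iff_le_comap.1 hJW.le) hW
  obtain ⟨b, hb⟩ := exists_orthonormalBasis_coe_eq (fun i => heW (finTwoMulEquiv m i))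
    (he.comp _ (finTwoMulEquiv m).injective) (by simp [hW])
  refine ⟨b, fun k => by simp [hb], ?_⟩
  have hωe (p q : Fin m × Bool) :
      ω (complexFrame J e p) (complexFrame J e q) = stdSymplectic p q := by
    rw [hω, inner_map_complexFrame hJ2 he]
  simp only [hb]
  exact omegaPow_comp_finTwoMulEquiv hωe
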